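/- arXiv:2007.03326 — 3 statements merged into one kernel-verified Lean document; each statement's English description precedes it below -/
import Mathlib

section
/- The BDNN training problem and its mixed-integer non-linear programming reformulation have the same optimal value: the infimum of the empirical loss ∑_{i=1}^m ℓ(y^i, f_{W,λ}(x^i)) over all weight matrices W^k ∈ ℝ^{d_k×d_{k−1}} and thresholds λ_k ∈ ℝ (k = 1,…,K) equals the infimum of ∑_{i=1}^m ℓ(y^i, u^{i,K}) over all W^k ∈ [−1,1]^{d_k×d_{k−1}}, λ_k ∈ [−1,1], and u^{i,k} ∈ {0,1}^{d_k} (i ∈ [m], k ∈ [K]) satisfying, componentwise, W^1 x^i < M_1 u^{i,1} + λ_1, W^1 x^i ≥ M_1 (u^{i,1} − 1) + λ_1, and for all k ∈ {2,…,K}: W^k u^{i,k−1} < M_k u^{i,k} + λ_k and W^k u^{i,k−1} ≥ M_k (u^{i,k} − 1) + λ_k, where M_1 = nr + 1 and M_k = d_{k−1} + 1. -/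
/-- Binary activation function: `σ_λ(α) = 1` if `α ≥ λ`, `0` if `α < λ`. -/
noncomputable def binAct (lam a : ℝ) : ℝ := if a < lam then 0 else 1

/-- Output of the first `k` layers of a BDNN with widths `d 0, d 1, …`,
weight matrices `W k : ℝ^{d (k+1) × d k}` (the matrix of layer `k+1`, 1-indexed) and
thresholds `lam k` (the threshold of layer `k+1`, 1-indexed). -/
noncomputable def bdnnOut (d : ℕ → ℕ) (W : (k : ℕ) → Matrix (Fin (d (k+1))) (Fin (d k)) ℝ)
    (lam : ℕ → ℝ) : (k : ℕ) → (Fin (d 0) → ℝ) → Fin (d k) → ℝ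
  | 0, x => x
  | k+1, x => fun j => binAct (lam k) ((W k).mulVec (bdnnOut d W lam k x) j)

lemma binAct_mem (l a : ℝ) : binAct l a = 0 ∨ binAct l a = 1 := by
  unfold binAct; split <;> simp

lemma bdnnOut_succ_mem (d : ℕ → ℕ) (W : (k : ℕ) → Matrix (Fin (d (k+1))) (Fin (d k)) ℝ)
    (lam : ℕ → ℝ) (k : ℕ) (x : Fin (d 0) → ℝ) (j : Fin (d (k+1))) :
    bdnnOut d W lam (k+1) x j = 0 ∨ bdnnOut d W lam (k+1) x j = 1 :=
  binAct_mem _ _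

lemma bdnnOut_smul (d : ℕ → ℕ) (W : (k : ℕ) → Matrix (Fin (d (k+1))) (Fin (d k)) ℝ)
    (lam : ℕ → ℝ) {c : ℝ} (hc : 0 < c) (k : ℕ) (x : Fin (d 0) → ℝ) :
    bdnnOut d (fun k => c • W k) (fun k => c * lam k) k x = bdnnOut d W lam k x := by
  induction k with
  | zero => rfl
  | succ k ih =>
    funext j
    show binAct (c * lam k)
        ((c • W k).mulVec (bdnnOut d (fun k => c • W k) (fun k => c * lam k) k x) j) = _
    rw [ih]
    simp only [Matrix.smul_mulVec, Pi.smul_apply, smul_eq_mul, binAct]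
    rw [if_congr (mul_lt_mul_iff_right₀ hc) rfl rfl]
    rfl

lemma abs_mulVec_le {p q : ℕ} (A : Matrix (Fin p) (Fin q) ℝ) (v : Fin q → ℝ) {a b : ℝ}
    (hA : ∀ j l, |A j l| ≤ a) (hv : ∀ l, |v l| ≤ b) (hb : 0 ≤ b) (j : Fin p) :
    |A.mulVec v j| ≤ q * (a * b) := by
  have h : A.mulVec v j = ∑ l, A j l * v l := rfl
  calc |A.mulVec v j| ≤ ∑ l, |A j l * v l| := by
        rw [h]; exact Finset.abs_sum_le_sum_abs _ _
    _ ≤ ∑ _l : Fin q, a * b := Finset.sum_le_sum fun l _ => by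
        rw [abs_mul]
        exact mul_le_mul (hA j l) (hv l) (abs_nonneg _) ((abs_nonneg _).trans (hA j l))
    _ = q * (a * b) := by simp [mul_comm]

/-- The BDNN training problem and its MINLP reformulation have the same optimal value.
Layers are 1-indexed `1, …, K`; the matrix of layer `k` is `W (k-1)` and its threshold
`lam (k-1)`; `u i k` plays the role of `u^{i,k}` (with `u i 0` irrelevant). -/
theorem bdnn_minlp_equiv
    (K : ℕ) (hK : 1 ≤ K) (m : ℕ) (d : ℕ → ℕ) (r : ℝ) (hr : 0 < r)
    (x : Fin m → Fin (d 0) → ℝ)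
    (hx : ∀ i, Real.sqrt (∑ l, x i l ^ 2) ≤ r)
    (y : Fin m → ℝ) (hy : ∀ i, y i = 0 ∨ y i = 1)
    (loss : ℝ → (Fin (d K) → ℝ) → ℝ) :
    sInf { v : ℝ | ∃ (W : (k : ℕ) → Matrix (Fin (d (k+1))) (Fin (d k)) ℝ) (lam : ℕ → ℝ),
        v = ∑ i, loss (y i) (bdnnOut d W lam K (x i)) } =
    sInf { v : ℝ |
      ∃ (W : (k : ℕ) → Matrix (Fin (d (k+1))) (Fin (d k)) ℝ) (lam : ℕ → ℝ)
        (u : Fin m → (k : ℕ) → Fin (d k) → ℝ),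
        (∀ k, k + 1 ≤ K → ∀ j l, W k j l ∈ Set.Icc (-1 : ℝ) 1) ∧
        (∀ k, k + 1 ≤ K → lam k ∈ Set.Icc (-1 : ℝ) 1) ∧
        (∀ i k, 1 ≤ k → k ≤ K → ∀ j, u i k j = 0 ∨ u i k j = 1) ∧
        (∀ i j, (W 0).mulVec (x i) j < ((d 0 : ℝ) * r + 1) * u i 1 j + lam 0) ∧
        (∀ i j, (W 0).mulVec (x i) j ≥ ((d 0 : ℝ) * r + 1) * (u i 1 j - 1) + lam 0) ∧
        (∀ i k, k + 2 ≤ K → ∀ j,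
          (W (k+1)).mulVec (u i (k+1)) j < ((d (k+1) : ℝ) + 1) * u i (k+2) j + lam (k+1)) ∧
        (∀ i k, k + 2 ≤ K → ∀ j,
          (W (k+1)).mulVec (u i (k+1)) j ≥ ((d (k+1) : ℝ) + 1) * (u i (k+2) j - 1) + lam (k+1)) ∧
        v = ∑ i, loss (y i) (u i K) } := by
  congr 1
  ext v
  constructor
  · rintro ⟨W, lam, rfl⟩
    -- scale down
    set B : ℝ := 1 + ∑ k ∈ Finset.range K, (|lam k| + ∑ j, ∑ l, |W k j l|) with hBdef
    have hsum0 : (0:ℝ) ≤ ∑ k ∈ Finset.range K, (|lam k| + ∑ j, ∑ l, |W k j l|) :=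
      Finset.sum_nonneg fun k _ => by positivity
    have hB1 : (1:ℝ) ≤ B := by simp only [hBdef]; linarith
    have hB0 : (0:ℝ) < B := by linarith
    set c : ℝ := 1 / (2 * B) with hcdef
    have hc : 0 < c := by positivity
    have habs : ∀ k, k + 1 ≤ K → |lam k| + ∑ j, ∑ l, |W k j l| ≤ B := by
      intro k hk
      have h1 : |lam k| + ∑ j, ∑ l, |W k j l| ≤
          ∑ k ∈ Finset.range K, (|lam k| + ∑ j, ∑ l, |W k j l|) :=
        Finset.single_le_sum (f := fun k => |lam k| + ∑ j, ∑ l, |W k j l|)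
          (fun k _ => by positivity) (Finset.mem_range.2 hk)
      simp only [hBdef]; linarith
    have key : ∀ w : ℝ, |w| ≤ B → |c * w| ≤ 1/2 := by
      intro w hw
      rw [abs_mul, abs_of_pos hc]
      have hcB : c * B = 1/2 := by
        rw [hcdef]; field_simp
      calc c * |w| ≤ c * B := mul_le_mul_of_nonneg_left hw hc.le
        _ = 1/2 := hcB
    have hlamB : ∀ k, k + 1 ≤ K → |lam k| ≤ B := by
      intro k hk
      have h2 : (0:ℝ) ≤ ∑ j, ∑ l, |W k j l| := by positivity
      linarith [habs k hk]
    have hWB : ∀ k, k + 1 ≤ K → ∀ j l, |W k j l| ≤ B := by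
      intro k hk j l
      have h1 : |W k j l| ≤ ∑ l, |W k j l| :=
        Finset.single_le_sum (f := fun l => |W k j l|) (fun _ _ => abs_nonneg _)
          (Finset.mem_univ l)
      have h2 : ∑ l, |W k j l| ≤ ∑ j, ∑ l, |W k j l| :=
        Finset.single_le_sum (f := fun j => ∑ l, |W k j l|)
          (fun _ _ => Finset.sum_nonneg fun _ _ => abs_nonneg _) (Finset.mem_univ j)
      have := habs k hk
      have := abs_nonneg (lam k)
      linarith
    have hW' : ∀ k, k + 1 ≤ K → ∀ j l, |(c • W k) j l| ≤ 1/2 := by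
      intro k hk j l
      have : (c • W k) j l = c * W k j l := rfl
      rw [this]
      exact key _ (hWB k hk j l)
    have hlam' : ∀ k, k + 1 ≤ K → |c * lam k| ≤ 1/2 := fun k hk => key _ (hlamB k hk)
    have hxl : ∀ i l, |x i l| ≤ r := by
      intro i l
      have h1 : (x i l) ^ 2 ≤ ∑ l, x i l ^ 2 :=
        Finset.single_le_sum (f := fun l => x i l ^ 2) (fun _ _ => sq_nonneg _)
          (Finset.mem_univ l)
      have h2 : |x i l| = Real.sqrt ((x i l) ^ 2) := (Real.sqrt_sq_eq_abs _).symm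
      rw [h2]
      exact le_trans (Real.sqrt_le_sqrt h1) (hx i)
    refine ⟨fun k => c • W k, fun k => c * lam k,
      fun i k => bdnnOut d (fun k => c • W k) (fun k => c * lam k) k (x i),
      ?_, ?_, ?_, ?_, ?_, ?_, ?_, ?_⟩
    · intro k hk j l
      have := hW' k hk j l
      rw [abs_le] at this
      simp only [Set.mem_Icc]
      constructor <;> linarith [this.1, this.2]
    · intro k hk
      have := hlam' k hk
      rw [abs_le] at this
      simp only [Set.mem_Icc]
      constructor <;> linarith [this.1, this.2]
    · intro i k hk1 hkK j
      obtain ⟨k', rfl⟩ : ∃ k', k = k' + 1 := ⟨k - 1, by omega⟩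
      exact bdnnOut_succ_mem _ _ _ _ _ _
    · intro i j
      have hA : |((c • W 0)).mulVec (x i) j| ≤ (d 0 : ℝ) * ((1/2) * r) :=
        abs_mulVec_le _ _ (hW' 0 hK) (hxl i) hr.le j
      have hl := hlam' 0 hK
      rw [abs_le] at hA hl
      have hdr : (0:ℝ) ≤ (d 0 : ℝ) * r := by positivity
      show ((c • W 0)).mulVec (x i) j <
        ((d 0 : ℝ) * r + 1) * binAct (c * lam 0) (((c • W 0)).mulVec (x i) j) + c * lam 0
      by_cases h : ((c • W 0)).mulVec (x i) j < c * lam 0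
      · simp only [binAct, if_pos h]; linarith
      · simp only [binAct, if_neg h]; push_neg at h; nlinarith [hA.2, hl.1]
    · intro i j
      have hA : |((c • W 0)).mulVec (x i) j| ≤ (d 0 : ℝ) * ((1/2) * r) :=
        abs_mulVec_le _ _ (hW' 0 hK) (hxl i) hr.le j
      have hl := hlam' 0 hK
      rw [abs_le] at hA hl
      have hdr : (0:ℝ) ≤ (d 0 : ℝ) * r := by positivity
      show ((c • W 0)).mulVec (x i) j ≥
        ((d 0 : ℝ) * r + 1) * (binAct (c * lam 0) (((c • W 0)).mulVec (x i) j) - 1) + c * lam 0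
      by_cases h : ((c • W 0)).mulVec (x i) j < c * lam 0
      · simp only [binAct, if_pos h]; nlinarith [hA.1, hl.2]
      · simp only [binAct, if_neg h]; push_neg at h; linarith
    · intro i k hk j
      have hub : ∀ l, |bdnnOut d (fun k => c • W k) (fun k => c * lam k) (k+1) (x i) l| ≤ 1 := by
        intro l
        rcases bdnnOut_succ_mem d (fun k => c • W k) (fun k => c * lam k) k (x i) l with h | h <;>
          rw [h] <;> norm_num
      have hA : |((c • W (k+1))).mulVec
          (bdnnOut d (fun k => c • W k) (fun k => c * lam k) (k+1) (x i)) j| ≤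
          (d (k+1) : ℝ) * ((1/2) * 1) :=
        abs_mulVec_le _ _ (hW' (k+1) hk) hub zero_le_one j
      have hl := hlam' (k+1) hk
      rw [abs_le] at hA hl
      have hd0 : (0:ℝ) ≤ (d (k+1) : ℝ) := Nat.cast_nonneg _
      show ((c • W (k+1))).mulVec
          (bdnnOut d (fun k => c • W k) (fun k => c * lam k) (k+1) (x i)) j <
        ((d (k+1) : ℝ) + 1) * binAct (c * lam (k+1)) (((c • W (k+1))).mulVec
          (bdnnOut d (fun k => c • W k) (fun k => c * lam k) (k+1) (x i)) j) + c * lam (k+1)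
      by_cases h : ((c • W (k+1))).mulVec
          (bdnnOut d (fun k => c • W k) (fun k => c * lam k) (k+1) (x i)) j < c * lam (k+1)
      · simp only [binAct, if_pos h]; linarith
      · simp only [binAct, if_neg h]; push_neg at h; linarith [hA.2, hl.1]
    · intro i k hk j
      have hub : ∀ l, |bdnnOut d (fun k => c • W k) (fun k => c * lam k) (k+1) (x i) l| ≤ 1 := by
        intro l
        rcases bdnnOut_succ_mem d (fun k => c • W k) (fun k => c * lam k) k (x i) l with h | h <;>
          rw [h] <;> norm_num
      have hA : |((c • W (k+1))).mulVec
          (bdnnOut d (fun k => c • W k) (fun k => c * lam k) (k+1) (x i)) j| ≤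
          (d (k+1) : ℝ) * ((1/2) * 1) :=
        abs_mulVec_le _ _ (hW' (k+1) hk) hub zero_le_one j
      have hl := hlam' (k+1) hk
      rw [abs_le] at hA hl
      have hd0 : (0:ℝ) ≤ (d (k+1) : ℝ) := Nat.cast_nonneg _
      show ((c • W (k+1))).mulVec
          (bdnnOut d (fun k => c • W k) (fun k => c * lam k) (k+1) (x i)) j ≥
        ((d (k+1) : ℝ) + 1) * (binAct (c * lam (k+1)) (((c • W (k+1))).mulVec
          (bdnnOut d (fun k => c • W k) (fun k => c * lam k) (k+1) (x i)) j) - 1) + c * lam (k+1)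
      by_cases h : ((c • W (k+1))).mulVec
          (bdnnOut d (fun k => c • W k) (fun k => c * lam k) (k+1) (x i)) j < c * lam (k+1)
      · simp only [binAct, if_pos h]; linarith [hA.1, hl.2]
      · simp only [binAct, if_neg h]; push_neg at h; linarith
    · simp only [bdnnOut_smul d W lam hc]
  · rintro ⟨W, lam, u, hWm, hlm, hub, h1lt, h1ge, hklt, hkge, rfl⟩
    refine ⟨W, lam, ?_⟩
    have key : ∀ i k, k + 1 ≤ K → bdnnOut d W lam (k+1) (x i) = u i (k+1) := by
      intro i k
      induction k with
      | zero =>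
        intro hk
        funext j
        show binAct (lam 0) ((W 0).mulVec (x i) j) = u i 1 j
        rcases hub i 1 le_rfl hk j with h0 | h1
        · have h := h1lt i j
          rw [h0] at h
          rw [h0]
          simp only [binAct, if_pos (by linarith : (W 0).mulVec (x i) j < lam 0)]
        · have h := h1ge i j
          rw [h1] at h
          rw [h1]
          simp only [binAct, if_neg (by push_neg; linarith : ¬ (W 0).mulVec (x i) j < lam 0)]
      | succ k ih =>
        intro hk
        have hprev := ih (by omega)
        funext j
        show binAct (lam (k+1)) ((W (k+1)).mulVec (bdnnOut d W lam (k+1) (x i)) j) = u i (k+2) j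
        rw [hprev]
        rcases hub i (k+2) (by omega) hk j with h0 | h1
        · have h := hklt i k hk j
          rw [h0] at h
          rw [h0]
          simp only [binAct,
            if_pos (by linarith : (W (k+1)).mulVec (u i (k+1)) j < lam (k+1))]
        · have h := hkge i k hk j
          rw [h1] at h
          rw [h1]
          simp only [binAct,
            if_neg (by push_neg; linarith : ¬ (W (k+1)).mulVec (u i (k+1)) j < lam (k+1))]
    obtain ⟨K', rfl⟩ : ∃ K', K = K' + 1 := ⟨K - 1, by omega⟩
    exact Finset.sum_congr rfl fun i _ => by rw [key i K' le_rfl]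
end

section
/- Hidden-layer big-M characterization: let w ∈ [−1,1]^d, λ ∈ [−1,1], h ∈ {0,1}^d, and suppose |wᵀh − λ| < d + 1. Then for u ∈ {0,1}, the constraints wᵀh < (d+1)·u + λ and wᵀh ≥ (d+1)·(u − 1) + λ both hold if and only if u = σ_λ(wᵀh). -/
/-- Hidden-layer big-M characterization. -/
theorem hidden_layer_bigM (d : ℕ) (w : Fin d → ℝ) (hw : ∀ l, w l ∈ Set.Icc (-1 : ℝ) 1)
    (lam : ℝ) (hlam : lam ∈ Set.Icc (-1 : ℝ) 1)
    (h : Fin d → ℝ) (hh : ∀ l, h l = 0 ∨ h l = 1)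
    (hM : |(∑ l, w l * h l) - lam| < (d : ℝ) + 1)
    (u : ℝ) (hu : u = 0 ∨ u = 1) :
    ((∑ l, w l * h l) < ((d : ℝ) + 1) * u + lam ∧
      (∑ l, w l * h l) ≥ ((d : ℝ) + 1) * (u - 1) + lam) ↔
      u = binAct lam (∑ l, w l * h l) := by
  rw [abs_lt] at hM
  unfold binAct
  rcases hu with rfl | rfl <;> split_ifs with hc <;>
    constructor <;> intro hx <;>
    first
      | (constructor <;> linarith [hx.1, hx.2])
      | (constructor <;> linarith)
      | linarith [hx.1, hx.2]
      | simp_all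
      | (exfalso; linarith [hx.1, hx.2])
end

section
/- Uniqueness of the activation variables in the BDNN big-M system: fix weight matrices W^k ∈ ℝ^{d_k×d_{k−1}}, thresholds λ_k ∈ ℝ (k = 1,…,K), a data point x ∈ ℝ^n, and arbitrary constants M_k ∈ ℝ. If binary vectors u^k ∈ {0,1}^{d_k} (k = 1,…,K) satisfy, componentwise, W^1 x < M_1 u^1 + λ_1, W^1 x ≥ M_1 (u^1 − 1) + λ_1, and for all k ∈ {2,…,K}, W^k u^{k−1} < M_k u^k + λ_k and W^k u^{k−1} ≥ M_k (u^k − 1) + λ_k, then u^1 = σ_{λ_1}(W^1 x) and u^k = σ_{λ_k}(W^k u^{k−1}) for all k ∈ {2,…,K}; in particular u^K = f_{W,λ}(x), and the feasible assignment of (u^1,…,u^K), if it exists, is unique. -/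
lemma binAct_key {lam M a v : ℝ} (hv : v = 0 ∨ v = 1)
    (hlt : a < M * v + lam) (hge : a ≥ M * (v - 1) + lam) :
    v = binAct lam a := by
  rcases hv with h | h <;> subst h <;> simp only [binAct]
  · rw [if_pos]; simpa using hlt
  · rw [if_neg]; simp at hge; exact not_lt.2 hge

lemma bdnn_aux (K : ℕ) (d : ℕ → ℕ)
    (W : (k : ℕ) → Matrix (Fin (d (k+1))) (Fin (d k)) ℝ) (lam : ℕ → ℝ)
    (x : Fin (d 0) → ℝ) (M : ℕ → ℝ)
    (u : (k : ℕ) → Fin (d k) → ℝ)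
    (hu : ∀ k, 1 ≤ k → k ≤ K → ∀ j, u k j = 0 ∨ u k j = 1)
    (h1 : ∀ j, (W 0).mulVec x j < M 1 * u 1 j + lam 0)
    (h2 : ∀ j, (W 0).mulVec x j ≥ M 1 * (u 1 j - 1) + lam 0)
    (h3 : ∀ k, k + 2 ≤ K → ∀ j,
      (W (k+1)).mulVec (u (k+1)) j < M (k+2) * u (k+2) j + lam (k+1))
    (h4 : ∀ k, k + 2 ≤ K → ∀ j,
      (W (k+1)).mulVec (u (k+1)) j ≥ M (k+2) * (u (k+2) j - 1) + lam (k+1)) :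
    ∀ k, k + 1 ≤ K → u (k+1) = bdnnOut d W lam (k+1) x := by
  intro k
  induction k with
  | zero =>
    intro hk
    funext j
    show u 1 j = binAct (lam 0) ((W 0).mulVec (bdnnOut d W lam 0 x) j)
    exact binAct_key (hu 1 le_rfl hk j) (h1 j) (h2 j)
  | succ k ih =>
    intro hk
    have hprev : u (k+1) = bdnnOut d W lam (k+1) x := ih (by omega)
    funext j
    show u (k+2) j = binAct (lam (k+1)) ((W (k+1)).mulVec (bdnnOut d W lam (k+1) x) j)
    rw [← hprev]
    exact binAct_key (hu (k+2) (by omega) hk j) (h3 k hk j) (h4 k hk j)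

/-- Uniqueness of the activation variables in the BDNN big-M system.
Layers are 1-indexed `1, …, K`; the matrix of layer `k` is `W (k-1)` and its threshold
`lam (k-1)`; `u k` plays the role of `u^k` for `k ∈ {1,…,K}` and `M k` of the big-M
constant of layer `k`.  Any feasible binary assignment equals the componentwise
activations, in particular `u^K = f_{W,λ}(x)` and the feasible assignment is unique. -/
theorem bdnn_activation_unique (K : ℕ) (hK : 1 ≤ K) (d : ℕ → ℕ)
    (W : (k : ℕ) → Matrix (Fin (d (k+1))) (Fin (d k)) ℝ) (lam : ℕ → ℝ)
    (x : Fin (d 0) → ℝ) (M : ℕ → ℝ)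
    (u : (k : ℕ) → Fin (d k) → ℝ)
    (hu : ∀ k, 1 ≤ k → k ≤ K → ∀ j, u k j = 0 ∨ u k j = 1)
    (h1 : ∀ j, (W 0).mulVec x j < M 1 * u 1 j + lam 0)
    (h2 : ∀ j, (W 0).mulVec x j ≥ M 1 * (u 1 j - 1) + lam 0)
    (h3 : ∀ k, k + 2 ≤ K → ∀ j,
      (W (k+1)).mulVec (u (k+1)) j < M (k+2) * u (k+2) j + lam (k+1))
    (h4 : ∀ k, k + 2 ≤ K → ∀ j,
      (W (k+1)).mulVec (u (k+1)) j ≥ M (k+2) * (u (k+2) j - 1) + lam (k+1)) :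
    (∀ j, u 1 j = binAct (lam 0) ((W 0).mulVec x j)) ∧
    (∀ k, k + 2 ≤ K → ∀ j,
      u (k+2) j = binAct (lam (k+1)) ((W (k+1)).mulVec (u (k+1)) j)) ∧
    u K = bdnnOut d W lam K x ∧
    ∀ u' : (k : ℕ) → Fin (d k) → ℝ,
      (∀ k, 1 ≤ k → k ≤ K → ∀ j, u' k j = 0 ∨ u' k j = 1) →
      (∀ j, (W 0).mulVec x j < M 1 * u' 1 j + lam 0) →
      (∀ j, (W 0).mulVec x j ≥ M 1 * (u' 1 j - 1) + lam 0) →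
      (∀ k, k + 2 ≤ K → ∀ j,
        (W (k+1)).mulVec (u' (k+1)) j < M (k+2) * u' (k+2) j + lam (k+1)) →
      (∀ k, k + 2 ≤ K → ∀ j,
        (W (k+1)).mulVec (u' (k+1)) j ≥ M (k+2) * (u' (k+2) j - 1) + lam (k+1)) →
      ∀ k, 1 ≤ k → k ≤ K → u' k = u k := by
  refine ⟨?_, ?_, ?_, ?_⟩
  · intro j; exact binAct_key (hu 1 le_rfl hK j) (h1 j) (h2 j)
  · intro k hk j; exact binAct_key (hu (k+2) (by omega) hk j) (h3 k hk j) (h4 k hk j)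
  · obtain ⟨m, rfl⟩ := Nat.exists_eq_succ_of_ne_zero (show K ≠ 0 by omega)
    exact bdnn_aux (m+1) d W lam x M u hu h1 h2 h3 h4 m le_rfl
  · intro u' hu' h1' h2' h3' h4' k hk1 hk2
    obtain ⟨m, rfl⟩ := Nat.exists_eq_succ_of_ne_zero (show k ≠ 0 by omega)
    rw [bdnn_aux K d W lam x M u hu h1 h2 h3 h4 m (by omega),
      bdnn_aux K d W lam x M u' hu' h1' h2' h3' h4' m (by omega)]
end
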